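/- arXiv:0711.1738 — 2 statements merged into one kernel-verified Lean document; each statement's English description precedes it below -/
import Mathlib

section
/- Let α ∈ {0,1}, let s and k be integers with s ≥ 1−α and k ≥ s+α, and let λ ∈ ℚ. Define A_{α,s,k}(λ) = Σ_{p=α}^{k} (−1)^p · C(k−s−p−1, p−α) · F_{k−p, s+α−1, p+1−2α}(λ). Then: if α = 0, A_{0,s,k}(λ) = Σ_{q=0}^{s} (−1)^q·(k+1−q)/(q!·(s−q)!) · Q_{q,s−1}(k+1−q, λ); and if α = 1, A_{1,s,k}(λ) = Σ_{q=0}^{s} (−1)^{q+1}/(q!·(s−q)!) · Q_{q,s}(k−1−q, λ). Consequently, for each fixed α, s and λ there is a polynomial P ∈ ℚ[x] of degree at most s, whose coefficient of x^s equals (−1)^α·(2−λ)^s/s!, with A_{α,s,k}(λ) = P(k) for all integers k ≥ s+α. -/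
/-!
Only the last `s + 1` summands of `A_{α,s,k}(λ)` survive: for `p < k - s` either the binomial
factor or every term of `F` vanishes. For `p = k - q` both generalized binomials have negative
top arguments and turn into ordinary ones up to sign, and a summand of `F` collapses to a product
of two falling factorials in `k`. Expanding `(λ - 1)^{ℓ-m}` inside `Q` and applying the
Chu–Vandermonde identity for falling factorials produces exactly these sums, which gives the
closed forms. Every term is `k ↦ (k + c)↓(1-α) · (k + c')↓(s+α-1)`, a monic polynomial of
degree `s`, so the leading coefficient is the sum of the coefficients; two applications of the
binomial theorem evaluate it to `(-1)^α (2-λ)^s / s!`.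
-/

/-- Falling factorial `x(x-1)⋯(x-n+1)` in `ℚ`. -/
def ffall (x : ℚ) (n : ℕ) : ℚ := ∏ i ∈ Finset.range n, (x - (i : ℚ))

/-- Generalized binomial coefficient: `C(x, n) = x(x-1)⋯(x-n+1)/n!` for `n ≥ 0`,
and `C(x, n) = 0` for `n < 0`. -/
def gchoose (x : ℚ) (n : ℤ) : ℚ :=
  if 0 ≤ n then ffall x n.toNat / ((n.toNat).factorial : ℚ) else 0

/-- `F_{ℓ,a,b}(λ) = ∑_{r=0}^{ℓ} λ^r C(ℓ-a-b-1, r) C(b, ℓ-r)`. -/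
def Ffun (l a b : ℕ) (lam : ℚ) : ℚ :=
  ∑ r ∈ Finset.range (l + 1),
    lam ^ r * gchoose ((l : ℚ) - a - b - 1) r * (b.choose (l - r) : ℚ)

/-- `Q_{ℓ,a}(b,λ) = ∑_{m=0}^{min(a,ℓ)} C(a,m) ((a+b-ℓ)↓(a-m)) (ℓ↓m) λ^m (λ-1)^(ℓ-m)`. -/
def Qfun (l a : ℕ) (b lam : ℚ) : ℚ :=
  ∑ m ∈ Finset.range (min a l + 1),
    (a.choose m : ℚ) * ffall ((a : ℚ) + b - l) (a - m) * ffall (l : ℚ) m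
      * lam ^ m * (lam - 1) ^ (l - m)

/-- `A_{α,s,k}(λ) = ∑_{p=α}^{k} (-1)^p C(k-s-p-1, p-α) F_{k-p, s+α-1, p+1-2α}(λ)`. -/
def Afun (α s k : ℕ) (lam : ℚ) : ℚ :=
  ∑ p ∈ Finset.Icc α k,
    (-1 : ℚ) ^ p * gchoose ((k : ℚ) - s - p - 1) ((p : ℤ) - α)
      * Ffun (k - p) (s + α - 1) (p + 1 - 2 * α) lam

open Finset Polynomial

lemma ffall_eq_eval_descPochhammer (x : ℚ) (n : ℕ) :
    ffall x n = (descPochhammer ℚ n).eval x := by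
  rw [descPochhammer_eval_eq_prod_range, ffall]

@[simp] lemma ffall_zero (x : ℚ) : ffall x 0 = 1 := rfl

@[simp] lemma ffall_one (x : ℚ) : ffall x 1 = x := by simp [ffall]

lemma ffall_succ (x : ℚ) (n : ℕ) : ffall x (n + 1) = ffall x n * (x - n) :=
  prod_range_succ _ _

lemma ffall_add (x : ℚ) (m n : ℕ) : ffall x (m + n) = ffall x m * ffall (x - m) n := by
  simp only [ffall, prod_range_add, Nat.cast_add, sub_sub]

lemma ffall_natCast (n m : ℕ) : ffall n m = n.descFactorial m := by
  rw [ffall_eq_eval_descPochhammer, descPochhammer_eval_eq_descFactorial]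

lemma ffall_natCast_eq_zero {n m : ℕ} (h : n < m) : ffall n m = 0 := by
  rw [ffall_natCast, Nat.descFactorial_of_lt h, Nat.cast_zero]

lemma ffall_natCast_div_factorial (n m : ℕ) : ffall n m / m.factorial = n.choose m := by
  rw [ffall_eq_eval_descPochhammer, Nat.cast_choose_eq_descPochhammer_div]

lemma ffall_neg_sub_one (y : ℚ) (n : ℕ) : ffall (-y - 1) n = (-1) ^ n * ffall (y + n) n := by
  induction n with
  | zero => simp
  | succ n ih =>
    rw [ffall_succ, ih, Nat.cast_succ, add_comm n 1, ffall_add, ← add_assoc]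
    simp only [ffall_one, Nat.cast_one, add_sub_cancel_right]
    ring

lemma ffall_add_eq_sum (x y : ℚ) (n : ℕ) :
    ffall (x + y) n = ∑ m ∈ range (n + 1), n.choose m * ffall x m * ffall y (n - m) := by
  have hsmeval (z : ℚ) (k : ℕ) : (descPochhammer ℤ k).smeval z = ffall z k := by
    rw [← aeval_eq_smeval, aeval_def, eval₂_eq_eval_map, descPochhammer_map,
      ffall_eq_eval_descPochhammer]
  simp only [← hsmeval, Ring.descPochhammer_smeval_add n (Commute.all x y),
    Nat.sum_antidiagonal_eq_sum_range_succ_mk, mul_assoc]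

lemma gchoose_natCast_right (x : ℚ) (n : ℕ) : gchoose x n = ffall x n / n.factorial := by
  simp [gchoose]

lemma gchoose_natCast (N n : ℕ) : gchoose N n = N.choose n := by
  rw [gchoose_natCast_right, ffall_natCast_div_factorial]

lemma gchoose_neg_sub_one (m n : ℕ) :
    gchoose (-(m : ℚ) - 1) n = (-1) ^ n * (m + n).choose n := by
  rw [gchoose_natCast_right, ffall_neg_sub_one, mul_div_assoc, ← Nat.cast_add,
    ffall_natCast_div_factorial]

lemma sum_range_eq_sum_range_of_eq_zero {M : Type*} [AddCommMonoid M] {f : ℕ → M} {m n : ℕ}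
    (hm : ∀ i, m ≤ i → f i = 0) (hn : ∀ i, n ≤ i → f i = 0) :
    ∑ i ∈ range m, f i = ∑ i ∈ range n, f i := by
  wlog h : m ≤ n generalizing m n
  · exact (this hn hm (by omega)).symm
  exact sum_subset (range_subset_range.2 h) fun i _ hi => hm i (by simpa using hi)

lemma Ffun_eq_zero (l a b : ℕ) (lam : ℚ) (h : a + b + 1 ≤ l) : Ffun l a b lam = 0 := by
  obtain ⟨c, rfl⟩ := Nat.exists_eq_add_of_le h
  refine sum_eq_zero fun r hr => ?_
  have htop : ((a + b + 1 + c : ℕ) : ℚ) - a - b - 1 = c := by push_cast; ring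
  rw [htop, gchoose_natCast]
  rcases lt_or_ge c r with hcr | hcr
  · simp [Nat.choose_eq_zero_of_lt hcr]
  · simp [Nat.choose_eq_zero_of_lt (show b < a + b + 1 + c - r by omega)]

lemma ffall_mul_ffall (x : ℚ) (m b c : ℕ) (hc : c ≤ 1) (h : c ≤ m + b) :
    ffall (x + m) m * ffall (x + c) b = ffall (x + c) c * ffall (x + m) (m + b - c) := by
  interval_cases c
  · simpa using (ffall_add (x + m) m b).symm
  · rcases m with _ | m
    · obtain ⟨b, rfl⟩ : ∃ b', b = b' + 1 := ⟨b - 1, by omega⟩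
      rw [add_comm b 1, ffall_add]
      simp
    · have hy : x + (m + 1 : ℕ) - m = x + (1 : ℕ) := by push_cast; ring
      rw [show m + 1 + b - 1 = m + b by omega, ffall_add _ m b, ffall_succ, hy, ffall_one]
      ring

lemma choose_mul_choose_mul_choose (T a r b c : ℕ) (hc : c ≤ 1) (h : c ≤ a + r + b) :
    ((a + T).choose a * (a + T + r).choose r * (T + c).choose b : ℚ)
        * (a.factorial * r.factorial * b.factorial)
      = ffall (T + c) c * ffall (a + T + r) (a + r + b - c) := by
  have hprod : ffall (a + T : ℕ) a * ffall (a + T + r : ℕ) r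
      = ffall (T + (a + r : ℕ)) (a + r) := by
    rw [add_comm a r, ffall_add]
    push_cast
    ring_nf
  simp only [← ffall_natCast_div_factorial]
  field_simp
  rw [hprod, Nat.cast_add T c, ffall_mul_ffall _ _ _ _ hc (by omega)]
  push_cast
  ring_nf

lemma descFactorial_mul_choose_sub (q m t : ℕ) :
    q.descFactorial m * (q - m).choose t = q.choose (m + t) * (m + t).descFactorial m := by
  have h := Nat.choose_mul (n := q) (Nat.le_add_right m t)
  rw [Nat.add_sub_cancel_left] at h
  rw [Nat.descFactorial_eq_factorial_mul_choose, Nat.descFactorial_eq_factorial_mul_choose,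
    mul_assoc, ← h]
  ring

lemma Qfun_eq_sum (q a : ℕ) (b lam : ℚ) :
    Qfun q a b lam = ∑ r ∈ range (q + 1),
      q.choose r * lam ^ r * (-1) ^ (q - r) * ffall (a + b - q + r) a := by
  set y : ℚ := a + b - q
  have hext : Qfun q a b lam = ∑ m ∈ range (q + 1),
      (a.choose m : ℚ) * ffall y (a - m) * ffall q m * lam ^ m * (lam - 1) ^ (q - m) := by
    refine sum_range_eq_sum_range_of_eq_zero (fun m hm => ?_) (fun m hm => ?_)
    · rcases lt_or_ge a m with h | h
      · simp [Nat.choose_eq_zero_of_lt h]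
      · simp [ffall_natCast_eq_zero (show q < m by omega)]
    · simp [ffall_natCast_eq_zero (show q < m by omega)]
  set f : ℕ → ℕ → ℚ := fun m t => a.choose m * ffall y (a - m)
    * (q.choose (m + t) * ffall (m + t : ℕ) m * lam ^ (m + t) * (-1) ^ (q - (m + t)))
  have hexpand : ∀ m ∈ range (q + 1), (a.choose m : ℚ) * ffall y (a - m) * ffall q m * lam ^ m
      * (lam - 1) ^ (q - m) = ∑ t ∈ range (q + 1 - m), f m t := by
    intro m hm
    rw [sub_eq_add_neg, add_pow, show q + 1 - m = q - m + 1 by simp at hm; omega, mul_sum]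
    refine sum_congr rfl fun t ht => ?_
    have hc : (q.descFactorial m : ℚ) * (q - m).choose t
        = q.choose (m + t) * (m + t).descFactorial m := by
      exact_mod_cast descFactorial_mul_choose_sub q m t
    simp only [f, ffall_natCast, pow_add, ← Nat.sub_sub]
    linear_combination (a.choose m : ℚ) * ffall y (a - m) * lam ^ m * lam ^ t
      * (-1) ^ (q - m - t) * hc
  rw [hext, sum_congr rfl hexpand, ← sum_range_diag_flip]
  refine sum_congr rfl fun r hr => ?_
  rw [show (a : ℚ) + b - q + r = r + y by ring, ffall_add_eq_sum, mul_sum]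
  have hdiag : ∀ m ∈ range (r + 1), f m (r - m)
      = q.choose r * lam ^ r * (-1) ^ (q - r) * (a.choose m * ffall r m * ffall y (a - m)) := by
    intro m hm
    simp only [f, Nat.add_sub_cancel' (show m ≤ r by simpa [Nat.lt_succ_iff] using hm)]
    ring
  rw [sum_congr rfl hdiag]
  refine sum_range_eq_sum_range_of_eq_zero (fun m hm => ?_) (fun m hm => ?_)
  · simp [ffall_natCast_eq_zero (show r < m by omega)]
  · simp [Nat.choose_eq_zero_of_lt (show a < m by omega)]

lemma neg_one_pow_mul_gchoose_mul_Ffun (a T c j : ℕ) (lam : ℚ) (hc : c ≤ 1)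
    (hcj : c ≤ a + j) :
    (-1) ^ T * gchoose (-(a : ℚ) - 1) T * Ffun j (a + j - c) (T + c) lam
      = (-1) ^ j * ffall (T + c) c / (j.factorial * a.factorial)
          * Qfun j (a + j - c) (T + c) lam := by
  have hsign (n : ℕ) : (-1 : ℚ) ^ n * (-1) ^ n = 1 := by rw [← mul_pow]; norm_num
  have hg : (-1) ^ T * gchoose (-(a : ℚ) - 1) T = (a + T).choose a := by
    rw [gchoose_neg_sub_one, ← mul_assoc, hsign, one_mul, Nat.choose_symm_add]
  have htop : (j : ℚ) - ((a + j - c : ℕ) : ℚ) - ((T + c : ℕ) : ℚ) - 1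
      = -((a + T : ℕ) : ℚ) - 1 := by
    push_cast [Nat.cast_sub hcj]
    ring
  rw [hg, Ffun, htop, Qfun_eq_sum, mul_sum, mul_sum]
  refine sum_congr rfl fun r hr => ?_
  obtain ⟨b, rfl⟩ : ∃ b, j = r + b := ⟨j - r, by simp at hr; omega⟩
  have hkey := choose_mul_choose_mul_choose T a r b c hc (by omega)
  have harg : ((a + (r + b) - c : ℕ) : ℚ) + (T + c) - ((r + b : ℕ) : ℚ) + r
      = ((a + T + r : ℕ) : ℚ) := by
    push_cast [Nat.cast_sub (show c ≤ a + (r + b) by omega)]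
    ring
  rw [gchoose_neg_sub_one, Nat.add_sub_cancel_left, harg,
    Nat.cast_choose ℚ (Nat.le_add_right r b), Nat.add_sub_cancel_left,
    show a + (r + b) - c = a + r + b - c by omega]
  push_cast at hkey ⊢
  field_simp
  rw [pow_add]
  linear_combination lam ^ r * (-1) ^ r * hkey
    - lam ^ r * (-1) ^ r * ffall (T + c) c * ffall (a + T + r) (a + r + b - c) * hsign b

lemma Afun_eq_sum_range (α s k : ℕ) (lam : ℚ) (hα : α ≤ 1) (hs : 1 ≤ s + α) (hk : s + α ≤ k) :
    Afun α s k lam = ∑ q ∈ range (s + 1),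
      (-1 : ℚ) ^ (k - q) * gchoose ((k : ℚ) - s - (k - q : ℕ) - 1) ((k - q : ℕ) - α : ℤ)
        * Ffun (k - (k - q)) (s + α - 1) (k - q + 1 - 2 * α) lam := by
  set g : ℕ → ℚ := fun p => (-1 : ℚ) ^ p * gchoose ((k : ℚ) - s - p - 1) ((p : ℤ) - α)
    * Ffun (k - p) (s + α - 1) (p + 1 - 2 * α) lam
  have hvanish : ∀ p ∈ Icc α k, p ∉ Icc (k - s) k → g p = 0 := by
    intro p hp hp'
    simp only [mem_Icc] at hp hp'
    obtain ⟨N, hN⟩ : ∃ N, k = s + p + 1 + N := ⟨k - (s + p + 1), by omega⟩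
    have htop : (k : ℚ) - s - p - 1 = N := by rw [hN]; push_cast; ring
    have hbot : (p : ℤ) - α = ((p - α : ℕ) : ℤ) := by omega
    simp only [g, htop, hbot, gchoose_natCast]
    rcases lt_or_ge N (p - α) with h | h
    · simp [Nat.choose_eq_zero_of_lt h]
    · rw [Ffun_eq_zero _ _ _ _ (by omega), mul_zero]
  rw [Afun, ← sum_subset (Icc_subset_Icc_left (by omega)) hvanish]
  exact sum_nbij' (fun p => k - p) (fun q => k - q) (by intro p; simp; omega)
    (by intro q; simp; omega) (by intro p; simp; omega) (by intro q; simp; omega)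
    (by intro p hp; simp at hp; simp only [g]; congr <;> omega)

lemma Afun_eq_sum_Qfun (α s k : ℕ) (lam : ℚ) (hα : α ≤ 1) (hs : 1 ≤ s + α) (hk : s + α ≤ k) :
    Afun α s k lam = ∑ q ∈ range (s + 1),
      (-1) ^ (q + α) * ffall ((k : ℚ) + 1 - 2 * α - q) (1 - α)
        / (q.factorial * (s - q).factorial)
        * Qfun q (s + α - 1) ((k : ℚ) + 1 - 2 * α - q) lam := by
  rw [Afun_eq_sum_range α s k lam hα hs hk]
  refine sum_congr rfl fun q hq => ?_
  simp only [mem_range] at hq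
  have hℓ : k - (k - q) = q := by omega
  have hdeg : s + α - 1 = (s - q) + q - (1 - α) := by omega
  have hbF : k - q + 1 - 2 * α = (k - q - α) + (1 - α) := by omega
  have htop : (k : ℚ) - s - ((k - q : ℕ) : ℚ) - 1 = -((s - q : ℕ) : ℚ) - 1 := by
    push_cast [Nat.cast_sub (show q ≤ k by omega), Nat.cast_sub (show q ≤ s by omega)]
    ring
  have hbot : ((k - q : ℕ) : ℤ) - α = ((k - q - α : ℕ) : ℤ) := by omega
  have hb : (k : ℚ) + 1 - 2 * α - q = ((k - q - α : ℕ) : ℚ) + ((1 - α : ℕ) : ℚ) := by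
    push_cast [Nat.cast_sub hα, Nat.cast_sub (show α ≤ k - q by omega),
      Nat.cast_sub (show q ≤ k by omega)]
    ring
  have hsign : (-1 : ℚ) ^ (k - q) = (-1) ^ α * (-1) ^ (k - q - α) := by
    rw [← pow_add]; congr 1; omega
  -- the shape of `neg_one_pow_mul_gchoose_mul_Ffun` for `a = s - q`, `T = k - q - α`, `c = 1 - α`
  rw [hℓ, hdeg, hbF, htop, hbot, hb, hsign, mul_assoc ((-1) ^ α), mul_assoc ((-1) ^ α),
    neg_one_pow_mul_gchoose_mul_Ffun _ _ _ _ _ (by omega) (by omega)]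
  ring

lemma eval_descPochhammer_comp_X_add_C (c x : ℚ) (n : ℕ) :
    ((descPochhammer ℚ n).comp (X + C c)).eval x = ffall (x + c) n := by
  rw [eval_comp, eval_add, eval_X, eval_C, ffall_eq_eval_descPochhammer]

lemma natDegree_descPochhammer_comp_X_add_C (c : ℚ) (n : ℕ) :
    ((descPochhammer ℚ n).comp (X + C c)).natDegree = n := by
  rw [natDegree_comp, descPochhammer_natDegree, natDegree_X_add_C, mul_one]

lemma coeff_sum_C_mul_of_monic {R ι : Type*} [CommSemiring R] (S : Finset ι) (c : ι → R)
    (p : ι → R[X]) (n : ℕ) (hp : ∀ i ∈ S, (p i).Monic ∧ (p i).natDegree = n) :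
    (∑ i ∈ S, C (c i) * p i).coeff n = ∑ i ∈ S, c i := by
  rw [finsetSum_coeff]
  refine sum_congr rfl fun i hi => ?_
  rw [coeff_C_mul, ← (hp i hi).2, (hp i hi).1.coeff_natDegree, mul_one]

lemma sum_sum_neg_one_pow_div_mul_choose (α s : ℕ) (lam : ℚ) :
    ∑ q ∈ range (s + 1), ∑ r ∈ range (q + 1),
      (-1) ^ (q + α) / (q.factorial * (s - q).factorial)
      * (q.choose r * lam ^ r * (-1) ^ (q - r)) = (-1) ^ α * (2 - lam) ^ s / s.factorial := by
  have hinner (q : ℕ) : ∑ r ∈ range (q + 1), (q.choose r * lam ^ r * (-1) ^ (q - r) : ℚ)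
      = (lam - 1) ^ q := by
    rw [sub_eq_add_neg, add_pow]
    exact sum_congr rfl fun r _ => by ring
  have hterm : ∀ q ∈ range (s + 1), (-1) ^ (q + α) / (q.factorial * (s - q).factorial)
      * (lam - 1) ^ q = (-1) ^ α / s.factorial * ((1 - lam) ^ q * 1 ^ (s - q) * s.choose q) := by
    intro q hq
    rw [Nat.cast_choose ℚ (show q ≤ s by simpa [Nat.lt_succ_iff] using hq),
      show 1 - lam = -1 * (lam - 1) by ring, mul_pow]
    field_simp
    ring
  simp only [← mul_sum, hinner]
  rw [sum_congr rfl hterm, ← mul_sum, ← add_pow, show 1 - lam + 1 = 2 - lam by ring]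
  ring

lemma exists_polynomial_eval_eq_Afun (α s : ℕ) (lam : ℚ) (hα : α ≤ 1) (hs : 1 ≤ s + α) :
    ∃ P : ℚ[X], P.natDegree ≤ s ∧ P.coeff s = (-1) ^ α * (2 - lam) ^ s / s.factorial ∧
      ∀ k : ℕ, s + α ≤ k → P.eval (k : ℚ) = Afun α s k lam := by
  set S := (range (s + 1)).sigma fun q => range (q + 1)
  set w : (Σ _ : ℕ, ℕ) → ℚ := fun i => (-1) ^ (i.1 + α) / (i.1.factorial * (s - i.1).factorial)
    * (i.1.choose i.2 * lam ^ i.2 * (-1) ^ (i.1 - i.2))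
  set p : (Σ _ : ℕ, ℕ) → ℚ[X] := fun i =>
    (descPochhammer ℚ (1 - α)).comp (X + C (1 - 2 * α - i.1 : ℚ))
      * (descPochhammer ℚ (s + α - 1)).comp
          (X + C ((s + α - 1 : ℕ) + 1 - 2 * α - 2 * i.1 + i.2 : ℚ))
  have hp : ∀ i ∈ S, (p i).Monic ∧ (p i).natDegree = s := by
    intro i _
    have hmonic (c : ℚ) (n : ℕ) : ((descPochhammer ℚ n).comp (X + C c)).Monic :=
      (monic_descPochhammer ℚ n).comp_X_add_C c
    refine ⟨(hmonic _ _).mul (hmonic _ _), ?_⟩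
    rw [(hmonic _ _).natDegree_mul (hmonic _ _), natDegree_descPochhammer_comp_X_add_C,
      natDegree_descPochhammer_comp_X_add_C]
    omega
  refine ⟨∑ i ∈ S, C (w i) * p i, ?_, ?_, fun k hk => ?_⟩
  · exact natDegree_sum_le_of_forall_le _ _ fun i hi =>
      (natDegree_C_mul_le _ _).trans (hp i hi).2.le
  · rw [coeff_sum_C_mul_of_monic S w p s hp, sum_sigma, sum_sum_neg_one_pow_div_mul_choose]
  · rw [eval_finsetSum, sum_sigma, Afun_eq_sum_Qfun α s k lam hα hs hk]
    refine sum_congr rfl fun q _ => ?_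
    rw [Qfun_eq_sum, mul_sum]
    refine sum_congr rfl fun r _ => ?_
    simp only [w, p, eval_mul, eval_C, eval_descPochhammer_comp_X_add_C]
    rw [show (k : ℚ) + (1 - 2 * α - q) = k + 1 - 2 * α - q by ring,
      show (k : ℚ) + ((s + α - 1 : ℕ) + 1 - 2 * α - 2 * q + r)
        = (s + α - 1 : ℕ) + (k + 1 - 2 * α - q) - q + r by ring]
    ring

/-- For `α ∈ {0,1}`, `s ≥ 1-α` and `k ≥ s+α`, the sum `A_{α,s,k}(λ)` equals the
stated expression in the `Q_{q,·}`, and consequently it is, for `k ≥ s+α`, the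
restriction of a polynomial in `k` of degree at most `s` whose coefficient of
`k^s` is `(-1)^α (2-λ)^s/s!`. -/
theorem Afun_eq (α s : ℕ) (hα : α ≤ 1) (hs : 1 ≤ s + α) (lam : ℚ) :
    (α = 0 → ∀ k : ℕ, s ≤ k → Afun 0 s k lam =
      ∑ q ∈ Finset.range (s + 1),
        (-1 : ℚ) ^ q * ((k : ℚ) + 1 - q) / ((q.factorial : ℚ) * ((s - q).factorial : ℚ))
          * Qfun q (s - 1) ((k : ℚ) + 1 - q) lam) ∧
    (α = 1 → ∀ k : ℕ, s + 1 ≤ k → Afun 1 s k lam =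
      ∑ q ∈ Finset.range (s + 1),
        (-1 : ℚ) ^ (q + 1) / ((q.factorial : ℚ) * ((s - q).factorial : ℚ))
          * Qfun q s ((k : ℚ) - 1 - q) lam) ∧
    (∃ P : Polynomial ℚ, P.natDegree ≤ s ∧
      P.coeff s = (-1 : ℚ) ^ α * (2 - lam) ^ s / (s.factorial : ℚ) ∧
      ∀ k : ℕ, s + α ≤ k → P.eval (k : ℚ) = Afun α s k lam) := by
  refine ⟨?_, ?_, exists_polynomial_eval_eq_Afun α s lam hα hs⟩
  · rintro rfl k hk
    rw [Afun_eq_sum_Qfun 0 s k lam zero_le_one hs hk]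
    simp
  · rintro rfl k hk
    rw [Afun_eq_sum_Qfun 1 s k lam le_rfl hs hk]
    refine sum_congr rfl fun q _ => ?_
    rw [show (k : ℚ) + 1 - 2 * (1 : ℕ) - q = k - 1 - q by push_cast; ring]
    simp
end

section
/- For every integer k ≥ 1 and every λ ∈ ℚ: Σ_{p=0}^{k} (−1)^p · C(k−1−p, p) · Σ_{r=0}^{k−p} λ^r · C(k−2p−1, r) · C(p+1, k−p−r) = 1 + Σ_{p≥0, 2p≤k−1} (−1)^p · C(k−1−p, p) · λ^{k−2p−1}. On the left-hand side, C(k−1−p, p) and C(k−2p−1, r) are generalized binomial coefficients (whose integer top arguments may be negative) and C(p+1, k−p−r) is an ordinary binomial coefficient; on the right-hand side all binomial coefficients are ordinary. -/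
lemma gchoose_natCast_s16 (x : ℚ) (n : ℕ) :
    gchoose x (n : ℤ) = ffall x n / (n.factorial : ℚ) := by
  simp [gchoose]

lemma ffall_cast_lt {m n : ℕ} (h : m < n) : ffall (m : ℚ) n = 0 :=
  Finset.prod_eq_zero (Finset.mem_range.2 h) (by simp)

lemma ffall_cast {m n : ℕ} (h : n ≤ m) :
    ffall (m : ℚ) n = (m.descFactorial n : ℚ) := by
  induction n with
  | zero => simp [ffall]
  | succ n ih =>
    rw [ffall, Finset.prod_range_succ, ← ffall, ih (by omega),
      Nat.descFactorial_succ, Nat.cast_mul, Nat.cast_sub (by omega : n ≤ m)]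
    ring

lemma gchoose_cast (m n : ℕ) : gchoose (m : ℚ) (n : ℤ) = (m.choose n : ℚ) := by
  rw [gchoose_natCast_s16]
  rcases le_or_gt n m with h | h
  · rw [ffall_cast h, Nat.descFactorial_eq_factorial_mul_choose, Nat.cast_mul,
      mul_div_assoc]
    rw [mul_comm]
    exact div_mul_cancel₀ _ (by positivity)
  · rw [ffall_cast_lt h, Nat.choose_eq_zero_of_lt h, zero_div, Nat.cast_zero]

lemma ffall_neg_one (n : ℕ) : ffall (-1) n = (-1) ^ n * (n.factorial : ℚ) := by
  induction n with
  | zero => simp [ffall]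
  | succ n ih =>
    rw [ffall, Finset.prod_range_succ, ← ffall, ih, Nat.factorial_succ]
    push_cast
    ring

lemma gchoose_neg_one (n : ℕ) : gchoose (-1) (n : ℤ) = (-1) ^ n := by
  rw [gchoose_natCast_s16, ffall_neg_one, mul_div_assoc,
    div_self (by positivity), mul_one]

lemma inner_eval (k p : ℕ) (hp : 2 * p + 1 ≤ k) (lam : ℚ) :
    ∑ r ∈ Finset.range (k - p + 1),
        lam ^ r * gchoose ((k : ℚ) - 2 * p - 1) r * ((p + 1).choose (k - p - r) : ℚ)
      = lam ^ (k - 2 * p - 1) := by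
  have htop : (k : ℚ) - 2 * p - 1 = ((k - 2 * p - 1 : ℕ) : ℚ) := by
    push_cast [Nat.cast_sub (by omega : 2 * p ≤ k), Nat.cast_sub (by omega : 1 ≤ k - 2 * p)]
    ring
  set m := k - 2 * p - 1 with hm
  rw [Finset.sum_eq_single_of_mem m (Finset.mem_range.2 (by omega))]
  · rw [htop, gchoose_cast, Nat.choose_self, Nat.cast_one, mul_one,
      show k - p - m = p + 1 by omega, Nat.choose_self, Nat.cast_one, mul_one]
  · intro r hr hne
    rcases lt_or_gt_of_ne hne with h | h
    · -- r < m : ordinary choose vanishes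
      rw [Nat.choose_eq_zero_of_lt (by omega : p + 1 < k - p - r), Nat.cast_zero, mul_zero]
    · -- r > m : gchoose vanishes
      rw [htop, gchoose_natCast_s16, ffall_cast_lt h, zero_div, mul_zero, zero_mul]

/-- For `k ≥ 1` and `λ ∈ ℚ`:
`∑_{p=0}^{k} (-1)^p C(k-1-p, p) ∑_{r=0}^{k-p} λ^r C(k-2p-1, r) C(p+1, k-p-r)
 = 1 + ∑_{2p ≤ k-1} (-1)^p C(k-1-p, p) λ^(k-2p-1)`,
where on the left the first two binomials are generalized (their integer tops
may be negative) and `C(p+1, k-p-r)` is ordinary, while on the right all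
binomials are ordinary. -/
theorem a1k_eval (k : ℕ) (hk : 1 ≤ k) (lam : ℚ) :
    ∑ p ∈ Finset.range (k + 1), (-1 : ℚ) ^ p * gchoose ((k : ℚ) - 1 - p) p *
      ∑ r ∈ Finset.range (k - p + 1),
        lam ^ r * gchoose ((k : ℚ) - 2 * p - 1) r * ((p + 1).choose (k - p - r) : ℚ)
    = 1 + ∑ p ∈ Finset.range k, (if 2 * p + 1 ≤ k then
        (-1 : ℚ) ^ p * ((k - 1 - p).choose p : ℚ) * lam ^ (k - 2 * p - 1) else 0) := by
  rw [Finset.sum_range_succ]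
  have hlast : (-1 : ℚ) ^ k * gchoose ((k : ℚ) - 1 - k) k *
      ∑ r ∈ Finset.range (k - k + 1),
        lam ^ r * gchoose ((k : ℚ) - 2 * k - 1) r * ((k + 1).choose (k - k - r) : ℚ) = 1 := by
    rw [show (k : ℚ) - 1 - k = -1 by ring, gchoose_neg_one,
      show k - k + 1 = 1 by omega, Finset.sum_range_one]
    simp [gchoose, ffall]
    rw [← mul_pow]
    norm_num
  rw [hlast, add_comm]
  congr 1
  refine Finset.sum_congr rfl fun p hp => ?_
  have hpk : p < k := Finset.mem_range.1 hp
  by_cases h : 2 * p + 1 ≤ k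
  · rw [if_pos h, inner_eval k p h lam,
      show (k : ℚ) - 1 - p = ((k - 1 - p : ℕ) : ℚ) by
        push_cast [Nat.cast_sub (by omega : 1 ≤ k), Nat.cast_sub (by omega : p ≤ k - 1)]; ring,
      gchoose_cast]
  · rw [if_neg h,
      show (k : ℚ) - 1 - p = ((k - 1 - p : ℕ) : ℚ) by
        push_cast [Nat.cast_sub (by omega : 1 ≤ k), Nat.cast_sub (by omega : p ≤ k - 1)]; ring,
      gchoose_natCast_s16, ffall_cast_lt (by omega : k - 1 - p < p), zero_div, mul_zero, zero_mul]
end
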